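/- arXiv:1307.4916 — 13 statements merged into one kernel-verified Lean document; each statement's English description precedes it below -/
import Mathlib

section
/- The multiplication of the EACP C(a,b) is associative, i.e. (x·y)·z = x·(y·z) for all x,y,z ∈ C, if and only if the structural constants satisfy: Σ_{j} a i j * a j k = 0 for all i,k ∈ Fin n, and b i = 0 for all i ∈ Fin n. -/
/-- Multiplication of the evolution algebra of a "chicken" population `C(a,b)`
on the space `(Fin n → K) × K`. -/
def eacpMul {K : Type*} [Field K] {n : ℕ} (a : Fin n → Fin n → K) (b : Fin n → K)
    (p q : (Fin n → K) × K) : (Fin n → K) × K :=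
  ((1 / 2 : K) • (fun j => ∑ i, (q.2 * p.1 i + p.2 * q.1 i) * a i j),
   (1 / 2 : K) * ∑ i, (q.2 * p.1 i + p.2 * q.1 i) * b i)

lemma eacpMul_comm {K : Type*} [Field K] {n : ℕ} (a : Fin n → Fin n → K) (b : Fin n → K)
    (p q : (Fin n → K) × K) : eacpMul a b p q = eacpMul a b q p := by
  simp only [eacpMul, Prod.mk.injEq]
  constructor
  · congr 1; funext j; apply Finset.sum_congr rfl; intros; ring
  · congr 1; apply Finset.sum_congr rfl; intros; ring

lemma eacpMul_left_zero {K : Type*} [Field K] {n : ℕ} (a : Fin n → Fin n → K) (b : Fin n → K)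
    (ha : ∀ i k : Fin n, ∑ j, a i j * a j k = 0) (hb : ∀ i : Fin n, b i = 0)
    (x y z : (Fin n → K) × K) : eacpMul a b (eacpMul a b x y) z = 0 := by
  have key : ∀ (c : Fin n → K) (k : Fin n), ∑ m, (∑ i, c i * a i m) * a m k = 0 := by
    intro c k
    simp only [Finset.sum_mul]
    rw [Finset.sum_comm]
    refine Finset.sum_eq_zero fun i _ => ?_
    simp only [mul_assoc, ← Finset.mul_sum, ha i k, mul_zero]
  simp only [eacpMul, hb, mul_zero, Finset.sum_const_zero]
  refine Prod.ext ?_ (by simp)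
  funext k
  simp only [Pi.smul_apply, smul_eq_mul, Prod.fst_zero, Pi.zero_apply]
  have : ∀ m, (z.2 * (1 / 2 * ∑ i, (y.2 * x.1 i + x.2 * y.1 i) * a i m)
        + 0 * z.1 m) * a m k
      = (z.2 * (1 / 2)) * ((∑ i, (y.2 * x.1 i + x.2 * y.1 i) * a i m) * a m k) := by
    intro m; ring
  rw [Finset.sum_congr rfl fun m _ => this m, ← Finset.mul_sum,
    key (fun i => y.2 * x.1 i + x.2 * y.1 i) k]
  ring

theorem eacp_associative_iff {K : Type*} [Field K] (h2 : (2 : K) ≠ 0)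
    {n : ℕ} (hn : 1 ≤ n) (a : Fin n → Fin n → K) (b : Fin n → K) :
    (∀ x y z : (Fin n → K) × K,
        eacpMul a b (eacpMul a b x y) z = eacpMul a b x (eacpMul a b y z)) ↔
      ((∀ i k : Fin n, ∑ j, a i j * a j k = 0) ∧ ∀ i : Fin n, b i = 0) := by
  constructor
  · intro H
    have hb : ∀ i, b i = 0 := by
      intro i
      have h := congrArg Prod.snd (H (0, 1) (Pi.single i 1, 0) (Pi.single i 1, 0))
      simp [eacpMul, Pi.single_apply, Finset.sum_ite_eq', mul_comm] at h
      rcases h with h | h | h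
      · exact absurd h h2
      · exact h
      · exact absurd h h2
    refine ⟨?_, hb⟩
    intro i k
    have h := congrArg (fun p => p.1 k) (H (Pi.single i 1, 0) (0, 1) (0, 1))
    simp [eacpMul, Pi.single_apply, Finset.sum_ite_eq', hb] at h
    rcases h with h | h
    · exact absurd h h2
    · have h' : (2 : K)⁻¹ * ∑ j, a i j * a j k = 0 := by
        rw [Finset.mul_sum]; simpa [mul_assoc] using h
      exact (mul_eq_zero.mp h').resolve_left (inv_ne_zero h2)
  · rintro ⟨ha, hb⟩ x y z
    rw [eacpMul_left_zero a b ha hb x y z, eacpMul_comm a b x (eacpMul a b y z),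
      eacpMul_left_zero a b ha hb y z x]
end

section
/- If the structural constants satisfy Σ_{j} a i j * a j k = 0 for all i,k ∈ Fin n and b i = 0 for all i ∈ Fin n, then the EACP C(a,b) is alternative: (x·x)·y = x·(x·y) and (y·x)·x = y·(x·x) for all x,y ∈ C. -/
theorem eacp_alternative {K : Type*} [Field K] (h2 : (2 : K) ≠ 0)
    {n : ℕ} (hn : 1 ≤ n) (a : Fin n → Fin n → K) (b : Fin n → K)
    (ha : ∀ i k : Fin n, ∑ j, a i j * a j k = 0) (hb : ∀ i : Fin n, b i = 0) :
    ∀ x y : (Fin n → K) × K,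
      eacpMul a b (eacpMul a b x x) y = eacpMul a b x (eacpMul a b x y) ∧
      eacpMul a b (eacpMul a b y x) x = eacpMul a b y (eacpMul a b x x) := by
  have aux : ∀ (c : Fin n → K) (j : Fin n), ∑ i, (∑ k, c k * a k i) * a i j = 0 := by
    intro c j
    simp_rw [Finset.sum_mul, mul_assoc]
    rw [Finset.sum_comm]
    simp_rw [← Finset.mul_sum, ha, mul_zero, Finset.sum_const_zero]
  have key : ∀ (p q y : (Fin n → K) × K),
      eacpMul a b (eacpMul a b p q) y = 0 ∧ eacpMul a b y (eacpMul a b p q) = 0 := by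
    intro p q y
    constructor <;>
    · refine Prod.ext ?_ (by simp [eacpMul, hb])
      funext j
      simp only [eacpMul, hb, mul_zero, Finset.sum_const_zero, zero_mul, mul_zero,
        add_zero, zero_add, Pi.smul_apply, smul_eq_mul, Prod.fst_zero, Pi.zero_apply]
      rw [Finset.sum_congr rfl (fun x' _ => show
        (y.2 * (1 / 2 * ∑ i, (q.2 * p.1 i + p.2 * q.1 i) * a i x')) * a x' j
        = (∑ k, (y.2 * (1 / 2) * (q.2 * p.1 k + p.2 * q.1 k)) * a k x') * a x' j by
          rw [Finset.mul_sum, Finset.mul_sum]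
          exact congrArg (· * a x' j) (Finset.sum_congr rfl (fun k _ => by ring)))]
      rw [aux, mul_zero]
  intro x y
  exact ⟨((key x x y).1).trans ((key x y x).2).symm,
         ((key y x x).1).trans ((key x x y).2).symm⟩
end

section
/- If the structural constants satisfy Σ_{j} a i j * a j k = 0 for all i,k ∈ Fin n and b i = 0 for all i ∈ Fin n, then the EACP C(a,b) satisfies the Jacobi identity: (x·y)·z + (y·z)·x + (z·x)·y = 0 for all x,y,z ∈ C. -/
theorem eacp_jacobi {K : Type*} [Field K] (h2 : (2 : K) ≠ 0)
    {n : ℕ} (hn : 1 ≤ n) (a : Fin n → Fin n → K) (b : Fin n → K)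
    (ha : ∀ i k : Fin n, ∑ j, a i j * a j k = 0) (hb : ∀ i : Fin n, b i = 0) :
    ∀ x y z : (Fin n → K) × K,
      eacpMul a b (eacpMul a b x y) z + eacpMul a b (eacpMul a b y z) x +
        eacpMul a b (eacpMul a b z x) y = 0 := by
  have key : ∀ x y z : (Fin n → K) × K, eacpMul a b (eacpMul a b x y) z = 0 := by
    intro x y z
    have hsnd : (eacpMul a b x y).2 = 0 := by simp [eacpMul, hb]
    ext j
    · show (1 / 2 : K) * (∑ i, (z.2 * (eacpMul a b x y).1 i +
        (eacpMul a b x y).2 * z.1 i) * a i j) = 0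
      rw [hsnd]
      have : ∀ i, (z.2 * (eacpMul a b x y).1 i + 0 * z.1 i) * a i j
          = ∑ k, z.2 * (1/2) * ((y.2 * x.1 k + x.2 * y.1 k) * (a k i * a i j)) := by
        intro i
        simp only [eacpMul, Pi.smul_apply, smul_eq_mul, zero_mul, add_zero, Finset.mul_sum]
        rw [Finset.sum_mul]
        congr 1; ext k; ring
      simp only [this]
      rw [Finset.sum_comm]
      have : ∀ k, ∑ i, z.2 * (1/2) * ((y.2 * x.1 k + x.2 * y.1 k) * (a k i * a i j)) = 0 := by
        intro k
        rw [← Finset.mul_sum, ← Finset.mul_sum, ha]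
        ring
      rw [Finset.sum_eq_zero fun k _ => this k, mul_zero]
    · simp [eacpMul, hb]
  intro x y z
  simp [key]
end

section
/- If the structural constants satisfy Σ_{j} a i j * a j k = 0 for all i,k ∈ Fin n and b i = 0 for all i ∈ Fin n, then the EACP C(a,b) satisfies the Jordan identity: (x·y)·(x·x) = x·(y·(x·x)) for all x,y ∈ C. -/
theorem eacp_jordan {K : Type*} [Field K] (h2 : (2 : K) ≠ 0)
    {n : ℕ} (hn : 1 ≤ n) (a : Fin n → Fin n → K) (b : Fin n → K)
    (ha : ∀ i k : Fin n, ∑ j, a i j * a j k = 0) (hb : ∀ i : Fin n, b i = 0) :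
    ∀ x y : (Fin n → K) × K,
      eacpMul a b (eacpMul a b x y) (eacpMul a b x x) =
        eacpMul a b x (eacpMul a b y (eacpMul a b x x)) := by
  intro x y
  have key : ∀ (c : Fin n → K) (k : Fin n), ∑ j, (∑ i, c i * a i j) * a j k = 0 := by
    intro c k
    simp_rw [Finset.sum_mul, mul_assoc]
    rw [Finset.sum_comm]
    simp_rw [← Finset.mul_sum, ha, mul_zero, Finset.sum_const_zero]
  have h0 : ∀ k : Fin n,
      (∑ m, y.2 * (1 / 2 * ∑ i, (x.2 * x.1 i + x.2 * x.1 i) * a i m) * a m k) = 0 := by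
    intro k
    calc (∑ m, y.2 * (1 / 2 * ∑ i, (x.2 * x.1 i + x.2 * x.1 i) * a i m) * a m k)
        = y.2 * (1 / 2) *
            ∑ m, (∑ i, (x.2 * x.1 i + x.2 * x.1 i) * a i m) * a m k := by
          rw [Finset.mul_sum]; exact Finset.sum_congr rfl fun _ _ => by ring
      _ = 0 := by rw [key (fun i => x.2 * x.1 i + x.2 * x.1 i) k, mul_zero]
  ext j
  · simp only [eacpMul, hb, mul_zero, Finset.sum_const_zero, zero_add, zero_mul,
      add_zero, Pi.smul_apply, smul_eq_mul]
    simp only [one_div] at h0 ⊢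
    simp [h0]
  · simp [eacpMul, hb]
end

section
/- If the structural constants satisfy Σ_{j} a i j * a j k = 0 for all i,k ∈ Fin n and b i = 0 for all i ∈ Fin n, then the EACP C(a,b) is nilpotent of index at most 3: every product of any three elements (in either association) is zero; moreover, if in addition a i j ≠ 0 for some i,j, then the nilpotency index is exactly 3, i.e. there exist x,y ∈ C with x·y ≠ 0. -/
theorem eacp_nilpotent_index_three {K : Type*} [Field K] (h2 : (2 : K) ≠ 0)
    {n : ℕ} (hn : 1 ≤ n) (a : Fin n → Fin n → K) (b : Fin n → K)
    (ha : ∀ i k : Fin n, ∑ j, a i j * a j k = 0) (hb : ∀ i : Fin n, b i = 0) :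
    (∀ x y z : (Fin n → K) × K,
        eacpMul a b (eacpMul a b x y) z = 0 ∧ eacpMul a b x (eacpMul a b y z) = 0) ∧
      ((∃ i j : Fin n, a i j ≠ 0) →
        ∃ x y : (Fin n → K) × K, eacpMul a b x y ≠ 0) := by
  -- every product has zero second component
  have hsnd : ∀ x y : (Fin n → K) × K, (eacpMul a b x y).2 = 0 := by
    intro x y
    simp [eacpMul, hb]
  -- the first component of a product is killed by a
  have hfst : ∀ (x y : (Fin n → K) × K) (k : Fin n),
      ∑ i, (eacpMul a b x y).1 i * a i k = 0 := by
    intro x y k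
    simp only [eacpMul, Pi.smul_apply, smul_eq_mul]
    calc ∑ i, (1 / 2 : K) * (∑ m, (y.2 * x.1 m + x.2 * y.1 m) * a m i) * a i k
        = ∑ i, ∑ m, (1 / 2 : K) * ((y.2 * x.1 m + x.2 * y.1 m) * (a m i * a i k)) := by
          congr 1; ext i
          rw [Finset.mul_sum, Finset.sum_mul]
          congr 1; ext m; ring
      _ = ∑ m, (1 / 2 : K) * ((y.2 * x.1 m + x.2 * y.1 m) * ∑ i, a m i * a i k) := by
          rw [Finset.sum_comm]
          congr 1; ext m
          rw [Finset.mul_sum, ← Finset.mul_sum]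
      _ = 0 := by simp [ha]
  -- a product of anything with a "product-like" element is zero
  have key : ∀ p z : (Fin n → K) × K, p.2 = 0 → (∀ k, ∑ i, p.1 i * a i k = 0) →
      eacpMul a b p z = 0 ∧ eacpMul a b z p = 0 := by
    intro p z hp2 hp1
    constructor <;>
    · refine Prod.ext ?_ (hsnd _ _)
      funext k
      simp only [eacpMul, Pi.smul_apply, smul_eq_mul, hp2, hb]
      simp only [zero_mul, mul_zero, add_zero, zero_add, Prod.fst_zero, Pi.zero_apply]
      rw [show ∀ f : Fin n → K, (∑ i, z.2 * f i * a i k) = z.2 * ∑ i, f i * a i k from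
        fun f => by rw [Finset.mul_sum]; congr 1; ext i; ring]
      rw [hp1 k]; ring
  constructor
  · intro x y z
    exact ⟨(key (eacpMul a b x y) z (hsnd x y) (hfst x y)).1,
           (key (eacpMul a b y z) x (hsnd y z) (hfst y z)).2⟩
  · rintro ⟨i, j, hij⟩
    refine ⟨(Pi.single i 1, 0), (0, 1), fun h => ?_⟩
    have := congrArg (fun p => p.1 j) h
    simp only [eacpMul, Pi.smul_apply, smul_eq_mul, one_mul, mul_zero, add_zero,
      Prod.fst_zero, Pi.zero_apply] at this
    rw [Finset.sum_eq_single i (fun m _ hm => by simp [Pi.single_apply, hm])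
      (fun hmem => absurd (Finset.mem_univ i) hmem)] at this
    simp [Pi.single_apply] at this
    rcases this with h | h
    · exact h2 h
    · exact hij h
end

section
/- Suppose the matrix of structural constants is lower triangular, i.e. a i j = 0 whenever j > i. Then for every m with 1 ≤ m ≤ n, the linear subspace S_m = { (x,u) ∈ C : x i = 0 for all i > m } of the EACP C(a,b) is closed under the multiplication of C (it is a subalgebra spanned by h_1,…,h_m and r). -/
theorem eacp_triangular_subalgebra {K : Type*} [Field K] (h2 : (2 : K) ≠ 0)
    {n : ℕ} (hn : 1 ≤ n) (a : Fin n → Fin n → K) (b : Fin n → K)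
    (htri : ∀ i j : Fin n, (i : ℕ) < (j : ℕ) → a i j = 0) :
    ∀ m : ℕ, 1 ≤ m → m ≤ n →
      ∀ p q : (Fin n → K) × K,
        (∀ i : Fin n, m ≤ (i : ℕ) → p.1 i = 0) →
        (∀ i : Fin n, m ≤ (i : ℕ) → q.1 i = 0) →
        ∀ i : Fin n, m ≤ (i : ℕ) → (eacpMul a b p q).1 i = 0 := by
  intro m hm1 hmn p q hp hq j hj
  simp only [eacpMul, Pi.smul_apply, smul_eq_mul]
  have : (∑ i, (q.2 * p.1 i + p.2 * q.1 i) * a i j) = 0 := by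
    apply Finset.sum_eq_zero
    intro i _
    by_cases h : m ≤ (i : ℕ)
    · rw [hp i h, hq i h]; ring
    · rw [htri i j (lt_of_lt_of_le (not_le.mp h) hj)]; ring
  rw [this, mul_zero]
end

section
/- An element (x,u) of the EACP C(a,b) is an absolute nilpotent element, i.e. (x,u)·(x,u) = 0, if and only if u = 0, or else (Σ_{i} a i j * x i = 0 for all j ∈ Fin n and Σ_{i} b i * x i = 0). -/
theorem eacp_absolute_nilpotents {K : Type*} [Field K] (h2 : (2 : K) ≠ 0)
    {n : ℕ} (hn : 1 ≤ n) (a : Fin n → Fin n → K) (b : Fin n → K)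
    (x : Fin n → K) (u : K) :
    eacpMul a b (x, u) (x, u) = 0 ↔
      u = 0 ∨ ((∀ j : Fin n, ∑ i, a i j * x i = 0) ∧ ∑ i, b i * x i = 0) := by
  have key : ∀ c : Fin n → K,
      (1 / 2 : K) * ∑ i, (u * x i + u * x i) * c i = u * ∑ i, c i * x i := by
    intro c
    rw [Finset.mul_sum, Finset.mul_sum]
    congr 1; ext i; field_simp; ring
  constructor
  · intro h
    simp only [eacpMul, Prod.mk_eq_zero] at h
    obtain ⟨h1, h3⟩ := h
    by_cases hu : u = 0
    · exact Or.inl hu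
    · refine Or.inr ⟨fun j => ?_, ?_⟩
      · have := congrFun h1 j
        simp only [Pi.smul_apply, smul_eq_mul, Pi.zero_apply] at this
        have := key (fun i => a i j) ▸ this
        exact (mul_eq_zero.mp this).resolve_left hu
      · have := (key b) ▸ h3
        exact (mul_eq_zero.mp this).resolve_left hu
  · intro h
    simp only [eacpMul, Prod.mk_eq_zero]
    constructor
    · funext j
      simp only [Pi.smul_apply, smul_eq_mul, Pi.zero_apply]
      have := key (fun i => a i j)
      rw [this]
      rcases h with h | ⟨h, _⟩
      · simp [h]
      · simp [h j]
    · rw [key b]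
      rcases h with h | ⟨_, h⟩ <;> simp [h]
end

section
/- Suppose the matrix A = (a i j) is invertible (det A ≠ 0). Then an element (x,u) of the EACP C(a,b) satisfies (x,u)·(x,u) = 0 if and only if u = 0 or x = 0: the set of absolute nilpotent elements is { (x,0) : x ∈ Fin n → K } ∪ { (0,u) : u ∈ K }. -/
theorem eacp_absolute_nilpotents_of_det_ne_zero {K : Type*} [Field K] (h2 : (2 : K) ≠ 0)
    {n : ℕ} (hn : 1 ≤ n) (a : Fin n → Fin n → K) (b : Fin n → K)
    (hA : (Matrix.of a).det ≠ 0) (x : Fin n → K) (u : K) :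
    eacpMul a b (x, u) (x, u) = 0 ↔ u = 0 ∨ x = 0 := by
  constructor
  · intro h
    by_cases hu : u = 0
    · exact Or.inl hu
    right
    have h1 := congrArg Prod.fst h
    simp only [eacpMul, Prod.fst_zero] at h1
    have hx : Matrix.vecMul x (Matrix.of a) = 0 := by
      funext j
      have := congrFun h1 j
      simp only [Pi.smul_apply, smul_eq_mul, Pi.zero_apply] at this
      have key : u * ∑ i, x i * a i j = 0 := by
        have e : ∀ i, (u * x i + u * x i) * a i j = 2 * (u * (x i * a i j)) := by
          intro i; ring
        simp_rw [e] at this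
        rw [← Finset.mul_sum, ← mul_assoc, one_div, inv_mul_cancel₀ h2, one_mul] at this
        rwa [Finset.mul_sum]
      simpa [Matrix.vecMul, dotProduct] using (mul_eq_zero.1 key).resolve_left hu
    exact Matrix.eq_zero_of_vecMul_eq_zero hA hx
  · rintro (rfl | rfl) <;>
      · simp only [eacpMul, Prod.ext_iff]
        constructor
        · funext j; simp
        · simp
end

section
/- An element (x,u) of the EACP C(a,b) is idempotent, i.e. (x,u)·(x,u) = (x,u), if and only if either (x,u) = (0,0), or u ≠ 0, u * Σ_{i} a i j * x i = x j for all j ∈ Fin n, and Σ_{i} b i * x i = 1. -/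
theorem eacp_idempotents {K : Type*} [Field K] (h2 : (2 : K) ≠ 0)
    {n : ℕ} (hn : 1 ≤ n) (a : Fin n → Fin n → K) (b : Fin n → K)
    (x : Fin n → K) (u : K) :
    eacpMul a b (x, u) (x, u) = (x, u) ↔
      (x = 0 ∧ u = 0) ∨
        (u ≠ 0 ∧ (∀ j : Fin n, u * ∑ i, a i j * x i = x j) ∧ ∑ i, b i * x i = 1) := by
  have e1 : ∀ j, (1 / 2 : K) * ∑ i, (u * x i + u * x i) * a i j
      = u * ∑ i, a i j * x i := by
    intro j
    rw [Finset.mul_sum, Finset.mul_sum]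
    refine Finset.sum_congr rfl fun i _ => ?_
    field_simp; ring
  have e2 : (1 / 2 : K) * ∑ i, (u * x i + u * x i) * b i = u * ∑ i, b i * x i := by
    rw [Finset.mul_sum, Finset.mul_sum]
    refine Finset.sum_congr rfl fun i _ => ?_
    field_simp; ring
  have key : eacpMul a b (x, u) (x, u) = (x, u) ↔
      (∀ j, u * ∑ i, a i j * x i = x j) ∧ u * ∑ i, b i * x i = u := by
    simp only [eacpMul, Prod.mk.injEq, funext_iff, Pi.smul_apply, smul_eq_mul, e1, e2]
  rw [key]
  constructor
  · rintro ⟨h1, hb⟩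
    by_cases hu : u = 0
    · left
      refine ⟨funext fun j => ?_, hu⟩
      have := h1 j
      rw [hu, zero_mul] at this
      simpa using this.symm
    · right
      refine ⟨hu, h1, ?_⟩
      exact mul_left_cancel₀ hu (by rw [hb, mul_one])
  · rintro (⟨hx, hu⟩ | ⟨hu, h1, hb⟩)
    · subst hx hu; simp
    · exact ⟨h1, by rw [hb, mul_one]⟩
end

section
/- Suppose the matrix A = (a i j) is invertible (det A ≠ 0). Then the linear map x ↦ L_x from the EACP C(a,b) to its K-linear endomorphisms, where L_x(y) = x·y, is injective; consequently the space of all left multiplication operators of C is spanned by L_{h_1},…,L_{h_n},L_r and has the same dimension n+1 as C. -/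
/-- The left multiplication map as a linear map in `p`. -/
def eacpL {K : Type*} [Field K] {n : ℕ} (a : Fin n → Fin n → K) (b : Fin n → K) :
    ((Fin n → K) × K) →ₗ[K] (((Fin n → K) × K) → ((Fin n → K) × K)) where
  toFun p := fun y => eacpMul a b p y
  map_add' p q := by
    funext y
    refine Prod.ext ?_ ?_
    · funext j
      simp only [eacpMul, Prod.fst_add, Prod.snd_add, Pi.add_apply, Pi.smul_apply,
        smul_eq_mul, ← Finset.sum_add_distrib, ← mul_add, Finset.mul_sum]
      congr 1; funext i; ring
    · simp only [eacpMul, Prod.fst_add, Prod.snd_add, Pi.add_apply,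
        ← Finset.sum_add_distrib, ← mul_add, Finset.mul_sum]
      congr 1; funext i; ring
  map_smul' c p := by
    funext y
    refine Prod.ext ?_ ?_
    · funext j
      simp only [eacpMul, Prod.smul_fst, Prod.smul_snd, Pi.smul_apply, smul_eq_mul,
        RingHom.id_apply, Finset.mul_sum]
      congr 1; funext i; ring
    · simp only [eacpMul, Prod.smul_fst, Prod.smul_snd, Pi.smul_apply, smul_eq_mul,
        RingHom.id_apply, Finset.mul_sum]
      congr 1; funext i; ring

lemma eacp_decomp {K : Type*} [Field K] {n : ℕ} (p : (Fin n → K) × K) :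
    p = (∑ i, p.1 i • ((Pi.single i (1 : K), (0 : K)) : (Fin n → K) × K))
        + p.2 • (((0 : Fin n → K), (1 : K)) : (Fin n → K) × K) := by
  refine Prod.ext ?_ ?_
  · funext j
    simp [Prod.fst_sum, Finset.sum_apply, Pi.single_apply, mul_comm]
  · simp [Prod.snd_sum]

theorem eacp_left_multiplications {K : Type*} [Field K] (h2 : (2 : K) ≠ 0)
    {n : ℕ} (hn : 1 ≤ n) (a : Fin n → Fin n → K) (b : Fin n → K)
    (hA : (Matrix.of a).det ≠ 0) :
    Function.Injective
        (fun p : (Fin n → K) × K => fun y : (Fin n → K) × K => eacpMul a b p y) ∧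
      Submodule.span K
          (Set.range (fun p : (Fin n → K) × K => fun y => eacpMul a b p y)) =
        Submodule.span K
          ((Set.range fun i : Fin n =>
              fun y => eacpMul a b (Pi.single i (1 : K), (0 : K)) y) ∪
            {fun y => eacpMul a b ((0 : Fin n → K), (1 : K)) y}) ∧
      Module.finrank K
          (Submodule.span K
            (Set.range (fun p : (Fin n → K) × K => fun y => eacpMul a b p y))) = n + 1 := by
  have h2' : (1 / 2 : K) ≠ 0 := by
    simpa using h2
  -- the function in the statement is ⇑(eacpL a b)
  have hfun : (fun p : (Fin n → K) × K => fun y : (Fin n → K) × K => eacpMul a b p y)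
      = ⇑(eacpL a b) := rfl
  have hinj : Function.Injective (eacpL a b) := by
    rw [← LinearMap.ker_eq_bot, Submodule.eq_bot_iff]
    intro p hp
    have hp' : (fun y => eacpMul a b p y) = 0 := hp
    -- evaluate at r = (0,1)
    have hr := congrFun hp' ((0 : Fin n → K), (1 : K))
    have h1 : p.1 = 0 := by
      apply Matrix.eq_zero_of_mulVec_eq_zero (M := (Matrix.of a).transpose)
        (by rwa [Matrix.det_transpose])
      funext j
      have := congrFun (congrArg Prod.fst hr) j
      simp only [eacpMul, Pi.smul_apply, smul_eq_mul, one_mul, mul_zero, add_zero,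
        Prod.fst_zero, Pi.zero_apply] at this
      have hsum : ∑ i, p.1 i * a i j = 0 :=
        by
          rcases mul_eq_zero.1 this with h | h
          · exact absurd h h2'
          · exact h
      simpa [Matrix.mulVec, dotProduct, Matrix.transpose_apply, mul_comm] using hsum
    have h2'' : p.2 = 0 := by
      by_contra hp2
      -- evaluate at each h_k : rows of A are all zero
      have hrow : ∀ k j, a k j = 0 := by
        intro k j
        have hk := congrFun hp' ((Pi.single k (1 : K)), (0 : K))
        have := congrFun (congrArg Prod.fst hk) j
        simp only [eacpMul, Pi.smul_apply, smul_eq_mul, zero_mul, zero_add,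
          Prod.fst_zero, Pi.zero_apply] at this
        rcases mul_eq_zero.1 this with h | h
        · exact absurd h h2'
        · simp only [Pi.single_apply, mul_ite, mul_one, mul_zero, ite_mul, zero_mul,
            Finset.sum_ite_eq', Finset.mem_univ, if_true] at h
          rcases mul_eq_zero.1 h with h' | h'
          · exact absurd h' hp2
          · exact h'
      have : (Matrix.of a).det = 0 := by
        have : Matrix.of a = 0 := by ext i j; exact hrow i j
        rw [this]
        have : Nonempty (Fin n) := ⟨⟨0, hn⟩⟩
        simp [Matrix.det_zero]
      exact hA this
    exact Prod.ext (by simp [h1]) (by simp [h2''])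
  have hspanS : Submodule.span K
      ((Set.range fun i : Fin n => ((Pi.single i (1 : K), (0 : K)) : (Fin n → K) × K)) ∪
        {(((0 : Fin n → K), (1 : K)) : (Fin n → K) × K)}) = ⊤ := by
    rw [Submodule.eq_top_iff']
    intro p
    rw [eacp_decomp p]
    refine Submodule.add_mem _ (Submodule.sum_mem _ fun i _ => Submodule.smul_mem _ _
      (Submodule.subset_span (Set.mem_union_left _ ⟨i, rfl⟩)))
      (Submodule.smul_mem _ _ (Submodule.subset_span (Set.mem_union_right _ rfl)))
  have himg : ((Set.range fun i : Fin n =>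
        fun y => eacpMul a b (Pi.single i (1 : K), (0 : K)) y) ∪
        {fun y => eacpMul a b ((0 : Fin n → K), (1 : K)) y})
      = ⇑(eacpL a b) '' ((Set.range fun i : Fin n =>
          ((Pi.single i (1 : K), (0 : K)) : (Fin n → K) × K)) ∪
          {(((0 : Fin n → K), (1 : K)) : (Fin n → K) × K)}) := by
    rw [Set.image_union, Set.image_singleton, ← Set.range_comp]
    rfl
  have hspan : Submodule.span K
      (Set.range (fun p : (Fin n → K) × K => fun y => eacpMul a b p y))
      = LinearMap.range (eacpL a b) := by
    rw [hfun, ← LinearMap.coe_range, Submodule.span_eq]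
  refine ⟨by rw [hfun]; exact hinj, ?_, ?_⟩
  · rw [hspan, himg, Submodule.span_image, hspanS, Submodule.map_top]
  · rw [hspan]
    rw [LinearMap.finrank_range_of_inj hinj]
    simp [Module.finrank_prod]
end

section
/- In the EACP C(a,b), for every x ∈ C, every m ≥ 2 and every choice of indices i_1, …, i_m ∈ Fin n, the composition of left multiplication operators by basis elements satisfies (L_{h_{i_m}} ∘ L_{h_{i_{m-1}}} ∘ ⋯ ∘ L_{h_{i_1}})(x) = (1/2^{m-1}) * (∏_{j=1}^{m-1} b i_j) • L_{h_{i_m}}(x). -/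
lemma eacp_single {K : Type*} [Field K] {n : ℕ} (a : Fin n → Fin n → K) (b : Fin n → K)
    (im : Fin n) (y : (Fin n → K) × K) :
    eacpMul a b (Pi.single im (1 : K), (0 : K)) y
      = ((1 / 2 : K) * y.2) • ((fun j => a im j), b im) := by
  unfold eacpMul
  ext j
  · simp [Pi.single_apply, mul_assoc]
  · simp [Pi.single_apply, mul_assoc]

lemma eacp_foldl_snd {K : Type*} [Field K] {n : ℕ} (a : Fin n → Fin n → K) (b : Fin n → K)
    (l : List (Fin n)) (x : (Fin n → K) × K) :
    (l.foldl (fun y i => eacpMul a b (Pi.single i (1 : K), (0 : K)) y) x).2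
      = (1 / 2 : K) ^ l.length * (l.map b).prod * x.2 := by
  induction l generalizing x with
  | nil => simp
  | cons i t ih =>
    rw [List.foldl_cons, ih, eacp_single]
    simp only [List.length_cons, List.map_cons, List.prod_cons, Prod.smul_snd, smul_eq_mul]
    ring

theorem eacp_left_mult_composition {K : Type*} [Field K] (h2 : (2 : K) ≠ 0)
    {n : ℕ} (hn : 1 ≤ n) (a : Fin n → Fin n → K) (b : Fin n → K)
    (x : (Fin n → K) × K) (l : List (Fin n)) (hl : l ≠ []) (im : Fin n) :
    eacpMul a b (Pi.single im (1 : K), (0 : K))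
        (l.foldl (fun y i => eacpMul a b (Pi.single i (1 : K), (0 : K)) y) x) =
      ((1 / 2 : K) ^ l.length * (l.map b).prod) •
        eacpMul a b (Pi.single im (1 : K), (0 : K)) x := by
  rw [eacp_single, eacp_single, eacp_foldl_snd, smul_smul]
  ring_nf
end

section
/- In the EACP C(a,b), for every x = (x₁,…,xₙ,u) ∈ C and every i ∈ Fin n one has (L_{h_i} ∘ L_r)(x) = (b(x)/2) • L_{h_i}(r), where b(x) = Σ_{k} b k * x k; i.e. h_i·(r·x) = ((Σ_k b k * x k)/2) • (h_i·r). -/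
theorem eacp_Li_comp_Lr {K : Type*} [Field K] (h2 : (2 : K) ≠ 0)
    {n : ℕ} (hn : 1 ≤ n) (a : Fin n → Fin n → K) (b : Fin n → K)
    (x : (Fin n → K) × K) (i : Fin n) :
    eacpMul a b (Pi.single i (1 : K), (0 : K))
        (eacpMul a b ((0 : Fin n → K), (1 : K)) x) =
      ((∑ k, b k * x.1 k) / 2) •
        eacpMul a b (Pi.single i (1 : K), (0 : K)) ((0 : Fin n → K), (1 : K)) := by
  refine Prod.ext (funext fun j => ?_) ?_ <;>
    simp [eacpMul, Pi.single_apply, Finset.sum_ite_eq', Finset.mul_sum, Finset.sum_mul,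
      mul_comm, mul_left_comm, mul_assoc] <;>
  · rw [div_eq_mul_inv, Finset.sum_mul, Finset.mul_sum, Finset.mul_sum]
    exact Finset.sum_congr rfl fun k _ => by ring
end

section
/- Suppose the matrix A = (a i j) is invertible (det A ≠ 0). If T : C → C is a K-linear map lying in the centroid of the EACP C(a,b), i.e. T(x·y) = x·(T y) and T(x·y) = (T x)·y for all x,y ∈ C, then T is a scalar multiple of the identity: there exists τ ∈ K with T = τ • id. Hence C is centroidal (its centroid is isomorphic to K). -/
theorem eacp_centroidal {K : Type*} [Field K] (h2 : (2 : K) ≠ 0)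
    {n : ℕ} (hn : 1 ≤ n) (a : Fin n → Fin n → K) (b : Fin n → K)
    (hA : (Matrix.of a).det ≠ 0)
    (T : ((Fin n → K) × K) →ₗ[K] ((Fin n → K) × K))
    (hTl : ∀ x y : (Fin n → K) × K, T (eacpMul a b x y) = eacpMul a b x (T y))
    (hTr : ∀ x y : (Fin n → K) × K, T (eacpMul a b x y) = eacpMul a b (T x) y) :
    ∃ τ : K, ∀ v : (Fin n → K) × K, T v = τ • v := by
  classical
  haveI : Nonempty (Fin n) := ⟨⟨0, hn⟩⟩
  set A : Matrix (Fin n) (Fin n) K := Matrix.of a with hAdef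
  have hu : IsUnit A.det := isUnit_iff_ne_zero.mpr hA
  have hhalf : (1/2 : K) ≠ 0 := div_ne_zero one_ne_zero h2
  -- cancellation on the right
  have cancel : ∀ v : Fin n → K, Matrix.vecMul v A = 0 → v = 0 := by
    intro v h
    calc v = Matrix.vecMul v 1 := (Matrix.vecMul_one v).symm
      _ = Matrix.vecMul v (A * A⁻¹) := by rw [Matrix.mul_nonsing_inv A hu]
      _ = Matrix.vecMul (Matrix.vecMul v A) A⁻¹ := (Matrix.vecMul_vecMul v A A⁻¹).symm
      _ = 0 := by rw [h]; simp
  set d : K := (T (0, 1)).2 with hd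
  -- r · r = 0
  have hrr : eacpMul a b (0, (1:K)) (0, 1) = 0 := by
    simp [eacpMul, Prod.ext_iff]
    exact Or.inr rfl
  -- first component of T r is zero
  have hc : (T (0, (1:K))).1 = 0 := by
    have h1 := hTl (0, (1:K)) (0, 1)
    rw [hrr, map_zero] at h1
    have h1' := congrArg Prod.fst h1.symm
    simp only [eacpMul, Prod.fst_zero] at h1'
    have hvm : Matrix.vecMul (T (0, (1:K))).1 A = 0 := by
      funext k
      have := congrFun h1' k
      simp only [Pi.smul_apply, smul_eq_mul, Pi.zero_apply, mul_zero, zero_mul, add_zero,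
        one_mul] at this
      have := (mul_eq_zero.mp this).resolve_left hhalf
      simpa [Matrix.vecMul, dotProduct, hAdef] using this
    exact cancel _ hvm
  -- second component of T h_j is zero
  have ht : ∀ j, (T ((Pi.single j (1:K) : Fin n → K), (0:K))).2 = 0 := by
    intro j
    by_contra htj
    have hA0 : A = 0 := by
      ext i k
      have h0 : eacpMul a b ((Pi.single i (1:K) : Fin n → K), (0:K)) ((Pi.single j (1:K) : Fin n → K), (0:K)) = 0 := by
        simp [eacpMul, Prod.ext_iff]
        exact Or.inr rfl
      have h1 := hTl ((Pi.single i (1:K) : Fin n → K), (0:K)) ((Pi.single j (1:K) : Fin n → K), (0:K))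
      rw [h0, map_zero] at h1
      have h1' := congrArg Prod.fst h1.symm
      have hk := congrFun h1' k
      simp only [eacpMul, Prod.fst_zero, Pi.smul_apply, smul_eq_mul, Pi.zero_apply,
        zero_mul, mul_zero, add_zero] at hk
      have hsum : ∑ x, (T ((Pi.single j (1:K) : Fin n → K), (0:K))).2 * (Pi.single i (1:K) : Fin n → K) x * a x k
          = (T ((Pi.single j (1:K) : Fin n → K), (0:K))).2 * a i k := by
        rw [Finset.sum_eq_single i]
        · simp
        · intro x _ hx; simp [Pi.single_eq_of_ne hx]
        · simp
      rw [hsum] at hk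
      have := (mul_eq_zero.mp hk).resolve_left hhalf
      have := (mul_eq_zero.mp this).resolve_left htj
      simpa [hAdef] using this
    rw [hA0] at hA
    simp at hA
  -- first component of T h_i
  have key : ∀ i, Matrix.vecMul (T ((Pi.single i (1:K) : Fin n → K), (0:K))).1 A
      = Matrix.vecMul (d • (Pi.single i (1:K) : Fin n → K)) A := by
    intro i
    have h1 := (hTl ((Pi.single i (1:K) : Fin n → K), (0:K)) (0, 1)).symm.trans
      (hTr ((Pi.single i (1:K) : Fin n → K), (0:K)) (0, 1))
    have h1' := congrArg Prod.fst h1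
    funext k
    have hk := congrFun h1' k
    simp only [eacpMul, Pi.smul_apply, smul_eq_mul, Pi.zero_apply, mul_zero, zero_mul,
      add_zero, zero_add, one_mul] at hk
    have hk2 := mul_left_cancel₀ hhalf hk
    simp only [Matrix.vecMul, dotProduct, hAdef, Matrix.of_apply, Pi.smul_apply,
      smul_eq_mul]
    rw [← hk2]
  have hTh1 : ∀ i, (T ((Pi.single i (1:K) : Fin n → K), (0:K))).1 = d • (Pi.single i (1:K) : Fin n → K) := by
    intro i
    have hsub : Matrix.vecMul ((T ((Pi.single i (1:K) : Fin n → K), (0:K))).1 - d • (Pi.single i (1:K) : Fin n → K)) A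
        = 0 := by
      rw [Matrix.sub_vecMul, key i, sub_self]
    exact sub_eq_zero.mp (cancel _ hsub)
  -- assemble
  refine ⟨d, fun v => ?_⟩
  have hTh : ∀ i, T ((Pi.single i (1:K) : Fin n → K), (0:K)) = d • ((Pi.single i (1:K) : Fin n → K), (0:K)) := by
    intro i
    refine Prod.ext ?_ ?_
    · rw [hTh1 i]; rfl
    · rw [ht i]; simp
  have hTrr : T (0, (1:K)) = d • ((0 : Fin n → K), (1:K)) := by
    refine Prod.ext ?_ ?_
    · rw [hc]; simp
    · simp [hd]
  have hv : v = (∑ i, v.1 i • ((Pi.single i (1:K) : Fin n → K), (0:K))) + v.2 • ((0 : Fin n → K), (1:K)) := by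
    refine Prod.ext ?_ ?_
    · funext k
      simp [Prod.fst_sum, Finset.sum_apply, Pi.single_apply, Finset.sum_ite_eq,
        Finset.sum_ite_eq', mul_comm]
    · simp [Prod.snd_sum]
  conv_lhs => rw [hv]
  rw [map_add, map_smul, map_sum, hTrr]
  simp only [map_smul, hTh]
  have : ∀ i : Fin n, v.1 i • d • ((Pi.single i (1:K) : Fin n → K), (0:K))
      = d • v.1 i • ((Pi.single i (1:K) : Fin n → K), (0:K)) := fun i => smul_comm _ _ _
  simp only [this, smul_comm v.2 d]
  rw [← Finset.smul_sum, ← smul_add, ← hv]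
end
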